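/- With λ₁ ≥ ... ≥ λ_p ≥ 0 and λ₁ > 0, the function x ↦ √(J_λ(x)), where J_λ(x) = Σᵢ λᵢ x₍ᵢ₎² with decreasingly sorted squared entries, is a norm on ℝ^p; in particular it is a convex function. -/

import Mathlib

/-!
By the rearrangement inequality, pairing the decreasing weights `λ` with the decreasingly sorted
squares maximises `∑ λᵢ x_{σ(i)}²` over all permutations `σ`. Hence `√J_λ(x)` is the maximum over
`σ` of the weighted Euclidean norms `√(∑ λᵢ x_{σ(i)}²)`, each of which is a seminorm of `x`; a
finite supremum of seminorms is a seminorm, and it is definite because the `σ = id` term is.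
-/

/-- The squared entries of `x` sorted in non-increasing order. -/
noncomputable def sortedSq {p : ℕ} (x : Fin p → ℝ) : Fin p → ℝ :=
  fun i => (x (Tuple.sort (fun j => -((x j) ^ 2)) i)) ^ 2

/-- The ordered ℓ₂ regularizer `J_λ(x) = Σᵢ λᵢ x₍ᵢ₎²`. -/
noncomputable def Jlam {p : ℕ} (lam x : Fin p → ℝ) : ℝ :=
  ∑ i, lam i * sortedSq x i

open Finset Equiv

section WeightedL2

variable {ι : Type*}

noncomputable def sqrtWeightMap (w : ι → ℝ) : (ι → ℝ) →ₗ[ℝ] EuclideanSpace ℝ ι :=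
  (WithLp.linearEquiv 2 ℝ (ι → ℝ)).symm.toLinearMap ∘ₗ
    LinearMap.pi fun i => √(w i) • LinearMap.proj i

theorem sqrtWeightMap_apply (w x : ι → ℝ) (i : ι) : sqrtWeightMap w x i = √(w i) * x i := rfl

variable [Fintype ι]

noncomputable def weightedL2Seminorm (w : ι → ℝ) : Seminorm ℝ (ι → ℝ) :=
  (normSeminorm ℝ (EuclideanSpace ℝ ι)).comp (sqrtWeightMap w)

theorem weightedL2Seminorm_apply {w : ι → ℝ} (hw : 0 ≤ w) (x : ι → ℝ) :
    weightedL2Seminorm w x = √(∑ i, w i * x i ^ 2) := by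
  simp only [weightedL2Seminorm, Seminorm.comp_apply, coe_normSeminorm, EuclideanSpace.norm_eq,
    sqrtWeightMap_apply, Real.norm_eq_abs, sq_abs, mul_pow, Real.sq_sqrt (hw _)]

theorem weightedL2Seminorm_eq_zero_iff {w : ι → ℝ} (hw : ∀ i, 0 < w i) (x : ι → ℝ) :
    weightedL2Seminorm w x = 0 ↔ x = 0 := by
  simp only [weightedL2Seminorm, Seminorm.comp_apply, coe_normSeminorm, norm_eq_zero]
  constructor
  · intro h
    funext i
    simpa [sqrtWeightMap_apply, Real.sqrt_ne_zero'.mpr (hw i)] using congrArg (· i) h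
  · rintro rfl
    exact map_zero _

end WeightedL2

section SortedL2

variable {p : ℕ} {lam : Fin p → ℝ}

theorem sum_mul_sq_comp_perm_le_Jlam (hlam : Antitone lam) (x : Fin p → ℝ) (σ : Perm (Fin p)) :
    ∑ i, lam i * x (σ i) ^ 2 ≤ Jlam lam x := by
  set τ := Tuple.sort (fun j => -x j ^ 2)
  have hsorted : Antitone fun i => x (τ i) ^ 2 := fun a b hab => by
    simpa using Tuple.monotone_sort (fun j => -x j ^ 2) hab
  calc ∑ i, lam i * x (σ i) ^ 2
      = ∑ i, lam i • (fun i => x (τ i) ^ 2) ((σ.trans τ.symm) i) := by simp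
    _ ≤ ∑ i, lam i • x (τ i) ^ 2 :=
      (hlam.monovary hsorted).sum_smul_comp_perm_le_sum_smul
    _ = Jlam lam x := rfl

noncomputable def sortedL2Seminorm (lam : Fin p → ℝ) : Seminorm ℝ (Fin p → ℝ) :=
  univ.sup fun σ : Perm (Fin p) => (weightedL2Seminorm lam).comp (LinearMap.funLeft ℝ ℝ σ)

theorem weightedL2Seminorm_comp_perm_le_sortedL2Seminorm (lam : Fin p → ℝ) (σ : Perm (Fin p)) :
    (weightedL2Seminorm lam).comp (LinearMap.funLeft ℝ ℝ σ) ≤ sortedL2Seminorm lam :=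
  le_sup (f := fun σ : Perm (Fin p) => (weightedL2Seminorm lam).comp (LinearMap.funLeft ℝ ℝ σ))
    (mem_univ σ)

theorem sortedL2Seminorm_apply (hlam : Antitone lam) (hnn : 0 ≤ lam) (x : Fin p → ℝ) :
    sortedL2Seminorm lam x = √(Jlam lam x) := by
  refine le_antisymm (Seminorm.finset_sup_apply_le (Real.sqrt_nonneg _) fun σ _ => ?_) ?_
  · rw [Seminorm.comp_apply, weightedL2Seminorm_apply hnn]
    exact Real.sqrt_le_sqrt (sum_mul_sq_comp_perm_le_Jlam hlam x σ)
  · have := weightedL2Seminorm_comp_perm_le_sortedL2Seminorm lam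
      (Tuple.sort fun j => -x j ^ 2) x
    rwa [Seminorm.comp_apply, weightedL2Seminorm_apply hnn] at this

theorem sortedL2Seminorm_eq_zero_iff (hlam : ∀ i, 0 < lam i) (x : Fin p → ℝ) :
    sortedL2Seminorm lam x = 0 ↔ x = 0 := by
  refine ⟨fun h => (weightedL2Seminorm_eq_zero_iff hlam x).mp ?_, fun h => h ▸ map_zero _⟩
  have := weightedL2Seminorm_comp_perm_le_sortedL2Seminorm lam 1 x
  rw [h] at this
  exact le_antisymm this (apply_nonneg _ _)

end SortedL2

theorem stmt3 {p : ℕ} (lam : Fin p → ℝ) (hmono : Antitone lam)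
    (hpos : ∀ i, 0 < lam i) :
    (∀ x : Fin p → ℝ, 0 ≤ Real.sqrt (Jlam lam x)) ∧
    (∀ x : Fin p → ℝ, Real.sqrt (Jlam lam x) = 0 ↔ x = 0) ∧
    (∀ (c : ℝ) (x : Fin p → ℝ),
      Real.sqrt (Jlam lam (c • x)) = |c| * Real.sqrt (Jlam lam x)) ∧
    (∀ x y : Fin p → ℝ,
      Real.sqrt (Jlam lam (x + y)) ≤ Real.sqrt (Jlam lam x) + Real.sqrt (Jlam lam y)) ∧
    ConvexOn ℝ Set.univ (fun x : Fin p → ℝ => Real.sqrt (Jlam lam x)) := by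
  have hq (x : Fin p → ℝ) : √(Jlam lam x) = sortedL2Seminorm lam x :=
    (sortedL2Seminorm_apply hmono (fun i => (hpos i).le) x).symm
  simp only [hq]
  exact ⟨apply_nonneg _, sortedL2Seminorm_eq_zero_iff hpos,
    fun c x => by rw [map_smul_eq_mul, Real.norm_eq_abs], map_add_le_add _, Seminorm.convexOn _⟩
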